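/- arXiv:2602.03799 — 2 statements merged into one kernel-verified Lean document; each statement's English description precedes it below -/
import Mathlib

section
/- Let S be a measurable space and ρ a probability measure on S. Let α, δ ∈ (0,1), and let p : S → ℝ be a measurable function with 0 ≤ p(s) ≤ 1 for all s (interpreted as the probability that the K-step trajectory started at s remains safe). Let V ⊆ S be a measurable set such that p(s) ≥ 1 − α for every s ∈ V (the trajectory-level conformal safety guarantee on verified states). Let X₁,…,X_N be i.i.d. random elements of S with law ρ, defined on a probability space (Ω, P), and let V̂ = (1/N)·#{i : Xᵢ ∈ V} be the empirical fraction of verified samples. Then P( ∫ p dρ ≥ ( V̂ − √( (1/(2N)) · log(2/δ) ) ) · (1 − α) ) ≥ 1 − δ. (This is the rigorous high-probability form of the paper's Theorem 1, whose proof combines ∫ p dρ ≥ (1−α)·ρ(V) with Hoeffding's inequality for the empirical frequency of V.) -/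
/-!
On the verified set `p ≥ 1 - α`, and `p ≥ 0` everywhere, so `∫ p dρ ≥ (1 - α) ρ(V)` (Markov).
The indicators `1_V(Xᵢ)` are independent, `[0, 1]`-valued, with mean `ρ(V)`; by Hoeffding's
inequality the empirical frequency `V̂` exceeds `ρ(V) + ε` with probability at most
`exp (-2 N ε²)`, which equals `δ / 2` for the chosen `ε`. Off that event
`(V̂ - ε)(1 - α) ≤ (1 - α) ρ(V) ≤ ∫ p dρ`.
-/

open MeasureTheory ProbabilityTheory

namespace MeasureTheory

variable {Ω : Type*} [MeasurableSpace Ω] {μ : Measure Ω}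

lemma integral_indicator_one_comp_of_map_eq {S : Type*} [MeasurableSpace S] {ρ : Measure S}
    {X : Ω → S} (hX : Measurable X) (hmap : μ.map X = ρ) {V : Set S} (hV : MeasurableSet V) :
    ∫ ω, V.indicator (fun _ ↦ (1 : ℝ)) (X ω) ∂μ = ρ.real V := by
  rw [← integral_indicator_one hV, ← hmap, integral_map (f := V.indicator 1) hX.aemeasurable
    (measurable_const.indicator hV).aestronglyMeasurable]
  rfl

lemma mul_measureReal_le_integral_of_le_on [IsFiniteMeasure μ] {f : Ω → ℝ} (hf0 : 0 ≤ᵐ[μ] f)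
    (hf : Integrable f μ) {c : ℝ} (hc : 0 ≤ c) {V : Set Ω} (hcV : ∀ x ∈ V, c ≤ f x) :
    c * μ.real V ≤ ∫ x, f x ∂μ :=
  calc c * μ.real V ≤ c * μ.real {x | c ≤ f x} :=
        mul_le_mul_of_nonneg_left (measureReal_mono hcV) hc
    _ ≤ ∫ x, f x ∂μ := mul_meas_ge_le_integral_of_nonneg hf0 hf c

lemma ofReal_one_sub_le_measure_of_compl_subset [IsProbabilityMeasure μ] {s t : Set Ω}
    (hs : MeasurableSet s) {δ : ℝ} (hsδ : μ.real s ≤ δ) (hst : sᶜ ⊆ t) :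
    ENNReal.ofReal (1 - δ) ≤ μ t := by
  rw [ENNReal.ofReal_le_iff_le_toReal (measure_ne_top μ t)]
  calc 1 - δ ≤ 1 - μ.real s := by linarith
    _ = μ.real sᶜ := (probReal_compl_eq_one_sub hs).symm
    _ ≤ μ.real t := measureReal_mono hst

end MeasureTheory

namespace ProbabilityTheory

variable {Ω : Type*} [MeasurableSpace Ω] {μ : Measure Ω} [IsProbabilityMeasure μ]

lemma measureReal_mean_ge_le_of_iIndepFun {ι : Type*} [Fintype ι] {Y : ι → Ω → ℝ}
    (hind : iIndepFun Y μ) (hm : ∀ i, AEMeasurable (Y i) μ)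
    {a b : ℝ} (hY : ∀ i, ∀ᵐ ω ∂μ, Y i ω ∈ Set.Icc a b) {m : ℝ} (hmean : ∀ i, μ[Y i] = m)
    {ε : ℝ} (hε : 0 ≤ ε) :
    μ.real {ω | m + ε ≤ (Fintype.card ι : ℝ)⁻¹ * ∑ i, Y i ω}
      ≤ Real.exp (-2 * Fintype.card ι * ε ^ 2 / (b - a) ^ 2) := by
  rcases (Fintype.card ι).eq_zero_or_pos with hempty | hpos
  · simp [hempty]
  set n : ℝ := (Fintype.card ι : ℝ)
  have hn : 0 < n := Nat.cast_pos.mpr hpos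
  have hcentered : iIndepFun (fun i ω ↦ Y i ω - m) μ :=
    hind.comp (fun _ x ↦ x - m) (fun _ ↦ measurable_id.sub_const m)
  have hsubG : ∀ i ∈ Finset.univ,
      HasSubgaussianMGF (fun ω ↦ Y i ω - m) ((‖b - a‖₊ / 2) ^ 2) μ :=
    fun i _ ↦ hmean i ▸ hasSubgaussianMGF_of_mem_Icc (hm i) (hY i)
  have hevent : {ω | m + ε ≤ n⁻¹ * ∑ i, Y i ω} = {ω | n * ε ≤ ∑ i, (Y i ω - m)} := by
    ext ω
    simp only [Set.mem_ofPred_eq, Finset.sum_sub_distrib, Finset.sum_const, Finset.card_univ,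
      nsmul_eq_mul]
    rw [le_inv_mul_iff₀ hn]
    constructor <;> intro h <;> linarith
  rw [hevent]
  refine (HasSubgaussianMGF.measure_sum_ge_le_of_iIndepFun hcentered hsubG
    (by positivity)).trans_eq ?_
  congr 1
  push_cast [Finset.sum_const, Finset.card_univ, nsmul_eq_mul, Real.norm_eq_abs, div_pow, sq_abs]
  rcases eq_or_ne ((b - a) ^ 2) 0 with hab | hab
  · simp [hab]
  field_simp
  ring

end ProbabilityTheory

/-- Theorem 1 of the paper (rigorous high-probability form): if `p s` is the probability
that the trajectory started at `s` is safe, `p ≥ 1 - α` on the verified set `V`, and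
`X₁, …, X_N` are i.i.d. samples from the initial-state distribution `ρ`, then with
probability at least `1 - δ` the overall safety probability `∫ p dρ` is at least
`(V̂ - √(log(2/δ)/(2N))) · (1 - α)`, where `V̂` is the empirical fraction of verified samples. -/
theorem stmt0 {S : Type*} [mS : MeasurableSpace S] (ρ : Measure S) [IsProbabilityMeasure ρ]
    {Ω : Type*} [MeasurableSpace Ω] (P : Measure Ω) [IsProbabilityMeasure P]
    (α δ : ℝ) (hα : α ∈ Set.Ioo (0:ℝ) 1) (hδ : δ ∈ Set.Ioo (0:ℝ) 1)
    (p : S → ℝ) (hpm : Measurable p) (hp0 : ∀ s, 0 ≤ p s) (hp1 : ∀ s, p s ≤ 1)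
    (V : Set S) (hV : MeasurableSet V) (hpV : ∀ s ∈ V, 1 - α ≤ p s)
    (N : ℕ) (hN : 0 < N)
    (X : Fin N → Ω → S) (hXm : ∀ i, Measurable (X i))
    (hXd : ∀ i, Measure.map (X i) P = ρ)
    (hXi : iIndepFun X P) :
    ENNReal.ofReal (1 - δ) ≤
      P {ω | ((N : ℝ)⁻¹ * ∑ i : Fin N, V.indicator (fun _ => (1 : ℝ)) (X i ω)
              - Real.sqrt ((1 / (2 * (N : ℝ))) * Real.log (2 / δ))) * (1 - α)
            ≤ ∫ s, p s ∂ρ} := by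
  set ε := Real.sqrt ((1 / (2 * (N : ℝ))) * Real.log (2 / δ))
  set q := ρ.real V
  have hexp : Real.exp (-2 * N * ε ^ 2) = δ / 2 := by
    have hN' : (N : ℝ) ≠ 0 := by positivity
    have hlog : 0 ≤ Real.log (2 / δ) :=
      Real.log_nonneg (by rw [le_div_iff₀ hδ.1]; linarith [hδ.2])
    rw [Real.sq_sqrt (by positivity), show -2 * (N : ℝ) * (1 / (2 * N) * Real.log (2 / δ))
      = -Real.log (2 / δ) by field_simp, Real.exp_neg, Real.exp_log (div_pos two_pos hδ.1),
      inv_div]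
  have hindicator : Measurable (V.indicator fun _ ↦ (1 : ℝ)) := measurable_const.indicator hV
  have hoeffding : P.real {ω | q + ε ≤ (N : ℝ)⁻¹ * ∑ i, V.indicator (fun _ ↦ (1 : ℝ)) (X i ω)}
      ≤ δ / 2 := by
    have := measureReal_mean_ge_le_of_iIndepFun (hXi.comp _ fun _ ↦ hindicator)
      (fun i ↦ (hindicator.comp (hXm i)).aemeasurable)
      (fun i ↦ ae_of_all _ fun ω ↦ ⟨Set.indicator_nonneg (fun _ _ ↦ zero_le_one) _,
        Set.indicator_le_self' (fun _ _ ↦ zero_le_one) _⟩)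
      (fun i ↦ integral_indicator_one_comp_of_map_eq (hXm i) (hXd i) hV)
      (Real.sqrt_nonneg _ : 0 ≤ ε)
    rwa [Fintype.card_fin, sub_zero, one_pow, div_one, hexp] at this
  have hsafety : (1 - α) * q ≤ ∫ s, p s ∂ρ :=
    mul_measureReal_le_integral_of_le_on (ae_of_all _ hp0)
      (Integrable.of_mem_Icc 0 1 hpm.aemeasurable (ae_of_all _ fun s ↦ ⟨hp0 s, hp1 s⟩))
      (by linarith [hα.2]) hpV
  refine ofReal_one_sub_le_measure_of_compl_subset (by measurability)
    (hoeffding.trans (by linarith [hδ.1])) fun ω hω ↦ ?_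
  simp only [Set.mem_compl_iff, Set.mem_ofPred_eq, not_le] at hω ⊢
  nlinarith [hα.2]
end

section
/- Let Z₁,…,Z_n, Z_{n+1} be i.i.d. real-valued random variables (nonconformity scores) on a probability space (Ω, P). Let α ∈ (0,1) with ⌈(n+1)(1−α)⌉ ≤ n, and let q̂ denote the ⌈(n+1)(1−α)⌉-th smallest value among Z₁,…,Z_n. Then P( Z_{n+1} ≤ q̂ ) ≥ 1 − α. -/
open MeasureTheory ProbabilityTheory
open scoped Classical

/-- The `k`-th smallest value (order statistic of rank `k`, with `1 ≤ k ≤ n`) of the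
finite family `f : Fin n → ℝ`: the infimum of the set of `x` such that at least `k`
of the values `f i` are `≤ x`. -/
noncomputable def kthSmallest (n : ℕ) (f : Fin n → ℝ) (k : ℕ) : ℝ :=
  sInf {x : ℝ | k ≤ (Finset.univ.filter (fun i => f i ≤ x)).card}

/-!
Let `r_j` be the number of scores strictly below `Z_j` among all `n + 1` scores. For every
outcome at least `k` indices satisfy `r_j < k`. Since i.i.d. scores are exchangeable, the
probability of `r_j < k` does not depend on `j`, so summing over `j` gives
`(n + 1) P(r_{n+1} < k) ≥ k`. Finally `r_{n+1} < k` leaves fewer than `k` calibration scores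
strictly below `Z_{n+1}`, which forces `Z_{n+1} ≤ q̂`, and `k / (n + 1) ≥ 1 - α` by the choice
of `k`.
-/

open Finset
open scoped ENNReal

def strictRank {ι α : Type*} [Fintype ι] [LinearOrder α] (v : ι → α) (j : ι) : ℕ :=
  #{i | v i < v j}

lemma le_card_strictRank_lt {ι α : Type*} [Fintype ι] [LinearOrder α] (v : ι → α) {k : ℕ}
    (hk : k ≤ Fintype.card ι) : k ≤ #{j | strictRank v j < k} := by
  by_cases hall : ∀ j, strictRank v j < k
  · simpa [hall] using hk
  obtain ⟨j, hj, hmin⟩ := exists_min_image {j | ¬strictRank v j < k} v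
    (by push Not at hall; simpa [Finset.Nonempty] using hall)
  simp only [mem_filter, mem_univ, true_and, not_lt] at hj hmin
  -- every value below the least value of rank `≥ k` has rank `< k`
  calc k ≤ strictRank v j := hj
    _ ≤ #{j | strictRank v j < k} := card_le_card fun i hi => by
      simp only [mem_filter, mem_univ, true_and] at hi ⊢
      by_contra! hik
      exact (hmin i hik).not_gt hi

lemma strictRank_comp_perm {ι α : Type*} [Fintype ι] [LinearOrder α] (v : ι → α)
    (e : Equiv.Perm ι) (j : ι) : strictRank (v ∘ e) j = strictRank v (e j) := by
  simp only [strictRank, Function.comp_apply]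
  exact card_equiv e (by simp)

lemma measurable_strictRank {ι : Type*} [Fintype ι] (j : ι) :
    Measurable fun v : ι → ℝ => strictRank v j := by
  simp only [strictRank, card_filter]
  exact Finset.measurable_sum _ fun i _ => Measurable.ite
    (measurableSet_lt (measurable_pi_apply i) (measurable_pi_apply j)) measurable_const
    measurable_const

lemma le_kthSmallest_of_card_lt {n k : ℕ} (hk : k ≤ n) (f : Fin n → ℝ) {z : ℝ}
    (h : #{i | f i < z} < k) : z ≤ kthSmallest n f k := by
  obtain ⟨M, hM⟩ := (Set.finite_range f).bddAbove
  refine le_csInf ⟨M, ?_⟩ fun x hx => ?_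
  · simpa [filter_true_of_mem fun i _ => hM (Set.mem_range_self i)] using hk
  · obtain ⟨i, hix, hiz⟩ :=
      not_subset.mp fun hsub => (h.trans_le hx).not_ge (card_le_card hsub)
    simp only [mem_filter, mem_univ, true_and, not_lt] at hix hiz
    exact hiz.trans hix

lemma le_kthSmallest_of_strictRank_last_lt {n k : ℕ} (hk : k ≤ n) (v : Fin (n + 1) → ℝ)
    (h : strictRank v (Fin.last n) < k) :
    v (Fin.last n) ≤ kthSmallest n (fun i => v i.castSucc) k := by
  refine le_kthSmallest_of_card_lt hk _ (lt_of_le_of_lt ?_ h)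
  exact card_le_card_of_injOn Fin.castSucc (fun i hi => by simpa using hi)
    (Fin.castSucc_injective n).injOn

lemma natCast_mul_measure_univ_le_sum {Ω ι : Type*} [MeasurableSpace Ω] [Fintype ι]
    (μ : Measure Ω) {A : ι → Set Ω} (hA : ∀ j, MeasurableSet (A j)) {k : ℕ}
    (h : ∀ ω, k ≤ #{j | ω ∈ A j}) : k * μ Set.univ ≤ ∑ j, μ (A j) := calc
  k * μ Set.univ = ∫⁻ _, (k : ℝ≥0∞) ∂μ := (lintegral_const _).symm
  _ ≤ ∫⁻ ω, ∑ j, (A j).indicator 1 ω ∂μ := lintegral_mono fun ω => by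
    simpa [Set.indicator_apply, sum_boole] using h ω
  _ = ∑ j, μ (A j) := by
    rw [lintegral_finsetSum _ fun j _ => measurable_one.indicator (hA j)]
    simp [lintegral_indicator_one (hA _)]

lemma identDistrib_comp_perm {Ω ι : Type*} [MeasurableSpace Ω] [Fintype ι] {P : Measure Ω}
    [IsProbabilityMeasure P]
    {Z : ι → Ω → ℝ} (hZm : ∀ i, Measurable (Z i)) (hZi : iIndepFun Z P)
    (hZid : ∀ i j, IdentDistrib (Z i) (Z j) P P) (e : Equiv.Perm ι) :
    IdentDistrib (fun ω i => Z (e i) ω) (fun ω i => Z i ω) P P where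
  aemeasurable_fst := (measurable_pi_lambda _ fun i => hZm (e i)).aemeasurable
  aemeasurable_snd := (measurable_pi_lambda _ hZm).aemeasurable
  map_eq := by
    rw [(hZi.precomp e.injective).map_fun_eq_pi_map fun i => (hZm _).aemeasurable,
      hZi.map_fun_eq_pi_map fun i => (hZm i).aemeasurable]
    exact congrArg Measure.pi (funext fun i => (hZid (e i) i).map_eq)

lemma natCast_le_card_mul_measure_strictRank_lt {Ω ι : Type*} [MeasurableSpace Ω] [Fintype ι]
    {P : Measure Ω} [IsProbabilityMeasure P]
    {Z : ι → Ω → ℝ} (hZm : ∀ i, Measurable (Z i)) (hZi : iIndepFun Z P)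
    (hZid : ∀ i j, IdentDistrib (Z i) (Z j) P P) {k : ℕ} (hk : k ≤ Fintype.card ι) (j : ι) :
    (k : ℝ≥0∞) ≤ Fintype.card ι * P {ω | strictRank (fun i => Z i ω) j < k} := by
  have hrank (l : ι) : MeasurableSet {v : ι → ℝ | strictRank v l < k} :=
    measurable_strictRank l measurableSet_Iio
  have hexch (l : ι) : P {ω | strictRank (fun i => Z i ω) l < k} =
      P {ω | strictRank (fun i => Z i ω) j < k} := by
    refine Eq.trans ?_ ((identDistrib_comp_perm hZm hZi hZid (Equiv.swap j l)).measure_mem_eq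
      (hrank j))
    congr 1 with ω
    change _ ↔ strictRank ((fun i => Z i ω) ∘ Equiv.swap j l) j < k
    rw [strictRank_comp_perm, Equiv.swap_apply_left]
    exact Iff.rfl
  calc (k : ℝ≥0∞) = k * P Set.univ := by simp
    _ ≤ ∑ l, P {ω | strictRank (fun i => Z i ω) l < k} :=
      natCast_mul_measure_univ_le_sum P (A := fun l => {ω | strictRank (fun i => Z i ω) l < k})
        (fun l => measurable_pi_lambda _ hZm (hrank l))
        fun ω => by simpa using le_card_strictRank_lt (fun i => Z i ω) hk
    _ = Fintype.card ι * P {ω | strictRank (fun i => Z i ω) j < k} := by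
      simp [hexch]

theorem stmt2_general {Ω : Type*} [MeasurableSpace Ω] (P : Measure Ω) [IsProbabilityMeasure P]
    (n : ℕ)
    (Z : Fin (n + 1) → Ω → ℝ) (hZm : ∀ i, Measurable (Z i))
    (hZi : iIndepFun Z P)
    (hZid : ∀ i j, IdentDistrib (Z i) (Z j) P P)
    (α : ℝ)
    (hk : ⌈((n : ℝ) + 1) * (1 - α)⌉₊ ≤ n) :
    ENNReal.ofReal (1 - α) ≤
      P {ω | Z (Fin.last n) ω ≤
        kthSmallest n (fun i : Fin n => Z i.castSucc ω) ⌈((n : ℝ) + 1) * (1 - α)⌉₊} := by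
  set k := ⌈((n : ℝ) + 1) * (1 - α)⌉₊
  have hrank := natCast_le_card_mul_measure_strictRank_lt hZm hZi hZid
    (by rw [Fintype.card_fin]; omega : k ≤ Fintype.card (Fin (n + 1))) (Fin.last n)
  rw [Fintype.card_fin] at hrank
  calc ENNReal.ofReal (1 - α) ≤ ENNReal.ofReal (k / (n + 1)) :=
        ENNReal.ofReal_le_ofReal <| (le_div_iff₀' (by positivity)).mpr (Nat.le_ceil _)
    _ = k / (n + 1 : ℕ) := by
        rw [ENNReal.ofReal_div_of_pos (by positivity)]
        norm_cast
    _ ≤ P {ω | strictRank (fun i => Z i ω) (Fin.last n) < k} := ENNReal.div_le_of_le_mul' hrank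
    _ ≤ _ := measure_mono fun ω => le_kthSmallest_of_strictRank_last_lt hk _

/-- Split conformal prediction coverage guarantee: for i.i.d. scores
`Z₀, …, Z_{n-1}, Z_n`, letting `q̂` be the `⌈(n+1)(1-α)⌉`-th smallest of the first `n`
(calibration) scores, the fresh score `Z_n` satisfies `Z_n ≤ q̂` with probability
at least `1 - α`. -/
theorem stmt2 {Ω : Type*} [MeasurableSpace Ω] (P : Measure Ω) [IsProbabilityMeasure P]
    (n : ℕ) (hn : 0 < n)
    (Z : Fin (n + 1) → Ω → ℝ) (hZm : ∀ i, Measurable (Z i))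
    (hZi : iIndepFun Z P)
    (hZid : ∀ i j, IdentDistrib (Z i) (Z j) P P)
    (α : ℝ) (hα : α ∈ Set.Ioo (0:ℝ) 1)
    (hk : ⌈((n : ℝ) + 1) * (1 - α)⌉₊ ≤ n) :
    ENNReal.ofReal (1 - α) ≤
      P {ω | Z (Fin.last n) ω ≤
        kthSmallest n (fun i : Fin n => Z i.castSucc ω) ⌈((n : ℝ) + 1) * (1 - α)⌉₊} :=
  stmt2_general P n Z hZm hZi hZid α hk
end
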